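/- arXiv:2602.17958 — 2 statements merged into one kernel-verified Lean document; each statement's English description precedes it below -/
import Mathlib

section
/- Let n be a positive natural number, let μ⋆, c, L ≥ 0 be real numbers, and let u, ū : {1,…,n} → ℝ be sequences such that for every k ∈ {1,…,n}: |u_k − ū_k| ≤ c·√(k·L) and ū_k ≤ k·μ⋆. Then ∑_{k=1}^n (u_k / k) − u_n ≤ (n·μ⋆ − ū_n) + 3c·√(n·L). -/
lemma sum_one_div_sqrt_le (n : ℕ) :
    ∑ k ∈ Finset.Icc 1 n, 1 / Real.sqrt k ≤ 2 * Real.sqrt n := by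
  induction n with
  | zero => simp
  | succ m ih =>
    rw [Finset.sum_Icc_succ_top (by omega : 1 ≤ m + 1)]
    have h1 : (0:ℝ) ≤ m := Nat.cast_nonneg m
    have hs : Real.sqrt m ≤ Real.sqrt (m+1) := Real.sqrt_le_sqrt (by linarith)
    have hpos : (0:ℝ) < Real.sqrt (m+1) := Real.sqrt_pos.mpr (by positivity)
    have key : 1 / Real.sqrt (m+1) ≤ 2 * Real.sqrt (m+1) - 2 * Real.sqrt m := by
      rw [div_le_iff₀ hpos]
      have hsq : Real.sqrt (m+1) * Real.sqrt (m+1) = (m:ℝ)+1 :=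
        Real.mul_self_sqrt (by positivity)
      have hsq2 : Real.sqrt m * Real.sqrt m = (m:ℝ) := Real.mul_self_sqrt h1
      nlinarith [Real.sqrt_nonneg (m:ℝ), Real.sqrt_nonneg ((m:ℝ)+1)]
    push_cast
    linarith

/-- Deterministic core of the bound on the average term
`g_t(i) = ∑_{l ∈ I_t^i} u_l/n_l − u_t` for a single base learner. -/
theorem average_term_bound
    (n : ℕ) (hn : 0 < n) (μstar c L : ℝ)
    (hμ : 0 ≤ μstar) (hc : 0 ≤ c) (hL : 0 ≤ L)
    (u ubar : ℕ → ℝ)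
    (hconc : ∀ k : ℕ, 1 ≤ k → k ≤ n → |u k - ubar k| ≤ c * Real.sqrt (k * L))
    (hmean : ∀ k : ℕ, 1 ≤ k → k ≤ n → ubar k ≤ (k : ℝ) * μstar) :
    (∑ k ∈ Finset.Icc 1 n, u k / k) - u n ≤
      ((n : ℝ) * μstar - ubar n) + 3 * c * Real.sqrt (n * L) := by
  have hterm : ∀ k ∈ Finset.Icc 1 n,
      u k / k ≤ μstar + c * Real.sqrt L * (1 / Real.sqrt k) := by
    intro k hk
    obtain ⟨hk1, hkn⟩ := Finset.mem_Icc.mp hk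
    have hkpos : (0:ℝ) < k := by exact_mod_cast hk1
    have h1 := hconc k hk1 hkn
    have h2 := hmean k hk1 hkn
    have habs : u k ≤ ubar k + c * Real.sqrt (k * L) := by
      have := abs_le.mp h1
      linarith [this.2]
    have hskl : Real.sqrt ((k:ℝ) * L) = Real.sqrt k * Real.sqrt L :=
      Real.sqrt_mul (by positivity) L
    rw [div_le_iff₀ hkpos]
    have hsk : Real.sqrt k * Real.sqrt k = (k:ℝ) := Real.mul_self_sqrt (by positivity)
    have hskpos : (0:ℝ) < Real.sqrt k := Real.sqrt_pos.mpr hkpos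
    calc u k ≤ ubar k + c * Real.sqrt (k * L) := habs
      _ ≤ (k:ℝ) * μstar + c * (Real.sqrt k * Real.sqrt L) := by rw [hskl]; linarith
      _ = (μstar + c * Real.sqrt L * (1 / Real.sqrt k)) * k := by
          field_simp; linear_combination (c * Real.sqrt L) * hsk
  have hsum : ∑ k ∈ Finset.Icc 1 n, u k / k ≤
      (n:ℝ) * μstar + c * Real.sqrt L * (2 * Real.sqrt n) := by
    calc ∑ k ∈ Finset.Icc 1 n, u k / k
        ≤ ∑ k ∈ Finset.Icc 1 n, (μstar + c * Real.sqrt L * (1 / Real.sqrt k)) :=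
          Finset.sum_le_sum hterm
      _ = (n:ℝ) * μstar + c * Real.sqrt L * ∑ k ∈ Finset.Icc 1 n, 1 / Real.sqrt k := by
          rw [Finset.sum_add_distrib, Finset.sum_const, Finset.mul_sum]
          simp [Nat.card_Icc]
      _ ≤ (n:ℝ) * μstar + c * Real.sqrt L * (2 * Real.sqrt n) := by
          have := mul_le_mul_of_nonneg_left (sum_one_div_sqrt_le n)
            (by positivity : (0:ℝ) ≤ c * Real.sqrt L)
          linarith
  have hun : ubar n - c * Real.sqrt (n * L) ≤ u n := by
    have := abs_le.mp (hconc n hn le_rfl)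
    linarith [this.1]
  have hnl : Real.sqrt ((n:ℝ) * L) = Real.sqrt n * Real.sqrt L :=
    Real.sqrt_mul (by positivity) L
  rw [hnl] at hun ⊢
  nlinarith
end

section
/- Let M be a positive integer, T a positive natural number, μ⋆, c, L ≥ 0 real numbers, and for each i ∈ {1,…,M} let n_i ≥ 1 be a natural number and u^i, ū^i : {1,…,n_i} → ℝ sequences such that for every k ∈ {1,…,n_i}: |u^i_k − ū^i_k| ≤ c·√(k·L) and ū^i_k ≤ k·μ⋆. Assume ∑_{i=1}^M n_i ≤ T. Then ∑_{i=1}^M ( ∑_{k=1}^{n_i} (u^i_k / k) − u^i_{n_i} ) ≤ ∑_{i=1}^M (n_i·μ⋆ − ū^i_{n_i}) + 3c·√(M·T·L). -/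
lemma sum_inv_sqrt_le (n : ℕ) :
    ∑ k ∈ Finset.Icc 1 n, (1:ℝ) / Real.sqrt k ≤ 2 * Real.sqrt n := by
  induction n with
  | zero => simp
  | succ m ih =>
    rw [Finset.sum_Icc_succ_top (Nat.one_le_iff_ne_zero.mpr (Nat.succ_ne_zero m))]
    have ha : (0:ℝ) ≤ Real.sqrt m := Real.sqrt_nonneg _
    have hb0 : (0:ℝ) < Real.sqrt ((m:ℝ)+1) := Real.sqrt_pos.mpr (by positivity)
    have ha2 : Real.sqrt m ^ 2 = m := Real.sq_sqrt (Nat.cast_nonneg m)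
    have hb2 : Real.sqrt ((m:ℝ)+1) ^ 2 = (m:ℝ)+1 := Real.sq_sqrt (by positivity)
    have key : 1 / Real.sqrt ((m:ℝ)+1) ≤ 2 * (Real.sqrt ((m:ℝ)+1) - Real.sqrt m) := by
      rw [div_le_iff₀ hb0]
      nlinarith [sq_nonneg (Real.sqrt ((m:ℝ)+1) - Real.sqrt m)]
    push_cast
    linarith

lemma single_bound (μstar c L : ℝ) (hμ : 0 ≤ μstar) (hc : 0 ≤ c) (hL : 0 ≤ L)
    (n : ℕ) (hn : 1 ≤ n) (u ubar : ℕ → ℝ)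
    (hconc : ∀ k, 1 ≤ k → k ≤ n → |u k - ubar k| ≤ c * Real.sqrt (k * L))
    (hmean : ∀ k, 1 ≤ k → k ≤ n → ubar k ≤ (k:ℝ) * μstar) :
    (∑ k ∈ Finset.Icc 1 n, u k / k) - u n ≤
      ((n:ℝ) * μstar - ubar n) + 3 * c * (Real.sqrt n * Real.sqrt L) := by
  have h1 : ∀ k ∈ Finset.Icc 1 n, u k / k ≤ μstar + c * Real.sqrt L * (1 / Real.sqrt k) := by
    intro k hk
    rw [Finset.mem_Icc] at hk
    have hk1 : (1:ℝ) ≤ (k:ℝ) := by exact_mod_cast hk.1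
    have hk0 : (0:ℝ) < (k:ℝ) := by linarith
    have hsk : (0:ℝ) < Real.sqrt k := Real.sqrt_pos.mpr hk0
    have hks : Real.sqrt k * Real.sqrt k = (k:ℝ) := Real.mul_self_sqrt (le_of_lt hk0)
    have hub : u k ≤ (k:ℝ) * μstar + c * Real.sqrt (k * L) := by
      have := abs_le.mp (hconc k hk.1 hk.2)
      have := hmean k hk.1 hk.2
      linarith [this]
    have hsplit : Real.sqrt ((k:ℝ) * L) = Real.sqrt k * Real.sqrt L :=
      Real.sqrt_mul (le_of_lt hk0) L
    rw [div_le_iff₀ hk0]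
    calc u k ≤ (k:ℝ) * μstar + c * Real.sqrt (k * L) := hub
      _ = (μstar + c * Real.sqrt L * (1 / Real.sqrt k)) * k := by
          rw [hsplit]; field_simp
          linear_combination c * Real.sqrt L * hks
  have h2 : (∑ k ∈ Finset.Icc 1 n, u k / k) ≤
      (n:ℝ) * μstar + c * Real.sqrt L * (2 * Real.sqrt n) := by
    calc (∑ k ∈ Finset.Icc 1 n, u k / k)
        ≤ ∑ k ∈ Finset.Icc 1 n, (μstar + c * Real.sqrt L * (1 / Real.sqrt k)) :=
          Finset.sum_le_sum h1
      _ = (n:ℝ) * μstar + c * Real.sqrt L * ∑ k ∈ Finset.Icc 1 n, (1:ℝ) / Real.sqrt k := by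
          rw [Finset.sum_add_distrib, Finset.sum_const, ← Finset.mul_sum]
          simp [Nat.card_Icc]
      _ ≤ (n:ℝ) * μstar + c * Real.sqrt L * (2 * Real.sqrt n) := by
          have := sum_inv_sqrt_le n
          have hcl : 0 ≤ c * Real.sqrt L := by positivity
          nlinarith
  have h3 : ubar n - c * Real.sqrt (n * L) ≤ u n := by
    have := abs_le.mp (hconc n hn le_rfl)
    linarith [this.1]
  have hsplit : Real.sqrt ((n:ℝ) * L) = Real.sqrt n * Real.sqrt L :=
    Real.sqrt_mul (Nat.cast_nonneg n) L
  rw [hsplit] at h3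
  linarith

/-- Deterministic multi-learner core of the corollary bounding `∑_i g_T(i)`. -/
theorem sum_average_terms_bound
    (M : ℕ) (hM : 0 < M) (T : ℕ) (hT : 0 < T)
    (μstar c L : ℝ) (hμ : 0 ≤ μstar) (hc : 0 ≤ c) (hL : 0 ≤ L)
    (n : Fin M → ℕ) (hn : ∀ i, 1 ≤ n i)
    (u ubar : Fin M → ℕ → ℝ)
    (hconc : ∀ (i : Fin M) (k : ℕ), 1 ≤ k → k ≤ n i →
      |u i k - ubar i k| ≤ c * Real.sqrt (k * L))
    (hmean : ∀ (i : Fin M) (k : ℕ), 1 ≤ k → k ≤ n i →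
      ubar i k ≤ (k : ℝ) * μstar)
    (hsum : ∑ i, n i ≤ T) :
    ∑ i, ((∑ k ∈ Finset.Icc 1 (n i), u i k / k) - u i (n i)) ≤
      (∑ i, ((n i : ℝ) * μstar - ubar i (n i))) + 3 * c * Real.sqrt (M * T * L) := by
  have step : ∑ i, ((∑ k ∈ Finset.Icc 1 (n i), u i k / k) - u i (n i)) ≤
      ∑ i, (((n i : ℝ) * μstar - ubar i (n i)) + 3 * c * (Real.sqrt (n i) * Real.sqrt L)) :=
    Finset.sum_le_sum fun i _ =>
      single_bound μstar c L hμ hc hL (n i) (hn i) (u i) (ubar i) (hconc i) (hmean i)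
  rw [Finset.sum_add_distrib] at step
  have cauchy : ∑ i, Real.sqrt (n i) ≤ Real.sqrt (M * T) := by
    have hsq : (∑ i, Real.sqrt (n i)) ^ 2 ≤ (M:ℝ) * ∑ i, ((n i : ℝ)) := by
      have := sq_sum_le_card_mul_sum_sq (s := Finset.univ)
        (f := fun i : Fin M => Real.sqrt (n i))
      simpa [Real.sq_sqrt (Nat.cast_nonneg _)] using this
    have hnonneg : 0 ≤ ∑ i, Real.sqrt (n i) :=
      Finset.sum_nonneg fun i _ => Real.sqrt_nonneg _
    have h1 : (∑ i, Real.sqrt (n i)) ^ 2 ≤ (M:ℝ) * T := by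
      have hcast : (∑ i, ((n i : ℝ))) ≤ (T:ℝ) := by exact_mod_cast hsum
      nlinarith [Nat.cast_nonneg (α := ℝ) M]
    calc (∑ i, Real.sqrt (n i)) = Real.sqrt ((∑ i, Real.sqrt (n i))^2) :=
          (Real.sqrt_sq hnonneg).symm
      _ ≤ Real.sqrt ((M:ℝ) * T) := Real.sqrt_le_sqrt h1
  have hsplit : Real.sqrt ((M:ℝ) * T * L) = Real.sqrt ((M:ℝ) * T) * Real.sqrt L :=
    Real.sqrt_mul (by positivity) L
  have hfin : ∑ i, 3 * c * (Real.sqrt (n i) * Real.sqrt L) ≤ 3 * c * Real.sqrt ((M:ℝ) * T * L) := by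
    rw [hsplit]
    have : ∑ i, 3 * c * (Real.sqrt (n i) * Real.sqrt L)
        = 3 * c * Real.sqrt L * ∑ i, Real.sqrt (n i) := by
      rw [Finset.mul_sum]; congr 1; ext i; ring
    rw [this]
    have h0 : 0 ≤ 3 * c * Real.sqrt L := by positivity
    nlinarith [Real.sqrt_nonneg ((M:ℝ) * T)]
  linarith
end
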